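/- For any field K and n ≥ 17 (also for n ∈ {9, 12, 14, 15}), there exists a quadratic K-algebra with n generators and n(n−1)/2 quadratic relations whose fourth graded component vanishes: h_4(K, n, n(n−1)/2) = 0. -/

import Mathlib

open TensorProduct

namespace GS

variable (K : Type*) [Field K] (V : Type*) [AddCommGroup V] [Module K V]

/-- The tensor product of two subspaces, as a subspace of the tensor product. -/
noncomputable def tsub {M N : Type*} [AddCommGroup M] [Module K M] [AddCommGroup N] [Module K N]
    (A : Submodule K M) (B : Submodule K N) : Submodule K (M ⊗[K] N) :=
  LinearMap.range (TensorProduct.map A.subtype B.subtype)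

/-- `V ≃ V^{⊗1}`. -/
noncomputable def pow1 : V ≃ₗ[K] ⨂[K]^1 V :=
  (PiTensorProduct.subsingletonEquiv (s := fun _ => V) (0 : Fin 1)).symm

/-- `V ⊗ V ≃ V^{⊗2}`. -/
noncomputable def pow2 : (V ⊗[K] V) ≃ₗ[K] ⨂[K]^2 V :=
  (TensorProduct.congr (pow1 K V) (pow1 K V)).trans
    ((TensorPower.mulEquiv (n := 1) (m := 1)).trans (TensorPower.cast K V (by norm_num)))

/-- The subspace `V^{⊗a} ⊗ L ⊗ V^{⊗b}` of `V^{⊗(a+(2+b))}`. -/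
noncomputable def segAux (a b : ℕ) (L : Submodule K (V ⊗[K] V)) :
    Submodule K (⨂[K]^(a + (2 + b)) V) :=
  Submodule.map (TensorPower.mulEquiv (n := a) (m := 2 + b)).toLinearMap
    (tsub K (⊤ : Submodule K (⨂[K]^a V))
      (Submodule.map (TensorPower.mulEquiv (n := 2) (m := b)).toLinearMap
        (tsub K (L.map (pow2 K V).toLinearMap) (⊤ : Submodule K (⨂[K]^b V)))))

/-- For `j : Fin (q-1)`, the subspace `V^{⊗j} ⊗ L ⊗ V^{⊗(q-2-j)}` of `V^{⊗q}`
(the `(j+1)`-st shift of `L`). -/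
noncomputable def shiftSub (q : ℕ) (L : Submodule K (V ⊗[K] V)) (j : Fin (q - 1)) :
    Submodule K (⨂[K]^q V) :=
  Submodule.map (TensorPower.cast K V (by have := j.2; omega : (j : ℕ) + (2 + (q - 2 - j)) = q)).toLinearMap
    (segAux K V j (q - 2 - j) L)

/-- `E_q(L,V) = ⋂_{j=1}^{q-1} V^{⊗(j-1)} ⊗ L ⊗ V^{⊗(q-1-j)} ⊆ V^{⊗q}`. -/
noncomputable def Eint (q : ℕ) (L : Submodule K (V ⊗[K] V)) : Submodule K (⨂[K]^q V) :=
  ⨅ j : Fin (q - 1), shiftSub K V q L j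

/-- The degree-`q` component of the two-sided ideal generated by the subspace
`M ⊆ V ⊗ V` of quadratic relations: the sum of all shifts `V^{⊗(j-1)} ⊗ M ⊗ V^{⊗(q-1-j)}`. -/
noncomputable def idealComp (q : ℕ) (M : Submodule K (V ⊗[K] V)) : Submodule K (⨂[K]^q V) :=
  ⨆ j : Fin (q - 1), shiftSub K V q M j

/-- The dimension of the degree-`q` component of the quadratic algebra with space of
relations `M ⊆ V ⊗ V` (the quotient of `V^{⊗q}` by the degree-`q` component of the ideal). -/
noncomputable def quadDim (q : ℕ) (M : Submodule K (V ⊗[K] V)) : ℕ :=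
  Module.finrank K ((⨂[K]^q V) ⧸ idealComp K V q M)

/-- `h_q(K,n,d)`: the minimal dimension of the `q`-th graded component over all quadratic
`K`-algebras with `n` generators and `d` (linearly independent) quadratic relations. -/
noncomputable def hq (n d q : ℕ) : ℕ :=
  sInf { h | ∃ M : Submodule K ((Fin n → K) ⊗[K] (Fin n → K)),
      Module.finrank K M = d ∧ quadDim K (Fin n → K) q M = h }

end GS

/-!
Split the `n = 2a + c` generators (`0 < c ≤ a`) into letters `x₁ … x_a`, `y₁ … y_a`,
`z₁ … z_c` and impose `xᵢxⱼ = yᵢyⱼ`, `xᵢyⱼ = z_{π i} z_{π j}`, `xᵢz_k = yᵢz_k = 0` for a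
surjection `π`. These are `2a² + 2ac` relations, at most `n(n-1)/2` for the listed `n`. Reading
them in both directions (`zz = xy` because `π` is onto), adjacent pairs of any word of length `4`
can be rewritten until a factor `xz` or `yz` appears; e.g. `u·xy·w = u·zz·w`, which vanishes
for `u ∈ {x, y}` and for `u = z` equals `x·yz·w = 0`. Hence `A₄ = 0`, and enlarging the space of
relations to dimension exactly `n(n-1)/2` keeps `A₄ = 0`.
-/

theorem Submodule.exists_le_finrank_eq {K E : Type*} [Field K] [AddCommGroup E] [Module K E]
    [FiniteDimensional K E] {M₀ : Submodule K E} {d : ℕ} (h₀ : Module.finrank K M₀ ≤ d)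
    (hd : d ≤ Module.finrank K E) : ∃ M : Submodule K E, M₀ ≤ M ∧ Module.finrank K M = d := by
  obtain ⟨k, rfl⟩ := Nat.exists_eq_add_of_le h₀
  induction k with
  | zero => exact ⟨M₀, le_rfl, rfl⟩
  | succ k ih =>
    obtain ⟨M, hle, hM⟩ := ih (by omega) (by omega)
    have hM_top : M < ⊤ := lt_top_iff_ne_top.mpr fun h => by
      rw [h, finrank_top] at hM; omega
    obtain ⟨v, -, hv⟩ := SetLike.exists_of_lt hM_top
    exact ⟨M ⊔ K ∙ v, hle.trans le_sup_left,
      by rw [Submodule.finrank_sup_span_singleton hv, hM, add_assoc]⟩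

namespace GS

open PiTensorProduct (tprod)

variable {K : Type*} [Field K] {V : Type*} [AddCommGroup V] [Module K V]

section Monotone

variable {M N : Type*} [AddCommGroup M] [Module K M] [AddCommGroup N] [Module K N]

lemma tmul_mem_tsub {A : Submodule K M} {B : Submodule K N} {x : M} {y : N}
    (hx : x ∈ A) (hy : y ∈ B) : x ⊗ₜ[K] y ∈ tsub K A B :=
  ⟨⟨x, hx⟩ ⊗ₜ ⟨y, hy⟩, rfl⟩

lemma tsub_mono {A A' : Submodule K M} {B B' : Submodule K N} (hA : A ≤ A') (hB : B ≤ B') :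
    tsub K A B ≤ tsub K A' B' := by
  rintro _ ⟨t, rfl⟩
  induction t with
  | zero => simp
  | tmul x y => exact tmul_mem_tsub (hA x.2) (hB y.2)
  | add s t hs ht => rw [map_add]; exact add_mem hs ht

end Monotone

lemma segAux_mono (a b : ℕ) {L L' : Submodule K (V ⊗[K] V)} (h : L ≤ L') :
    segAux K V a b L ≤ segAux K V a b L' :=
  Submodule.map_mono <| tsub_mono le_rfl <| Submodule.map_mono <|
    tsub_mono (Submodule.map_mono h) le_rfl

lemma idealComp_mono (q : ℕ) {L L' : Submodule K (V ⊗[K] V)} (h : L ≤ L') :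
    idealComp K V q L ≤ idealComp K V q L' :=
  iSup_mono fun _ => Submodule.map_mono (segAux_mono _ _ h)

lemma mulEquiv_tprod {a b : ℕ} (u : Fin a → V) (w : Fin b → V) :
    TensorPower.mulEquiv (tprod K u ⊗ₜ[K] tprod K w) = tprod K (Fin.append u w) := by
  rw [← TensorPower.gMul_def, TensorPower.tprod_mul_tprod]

lemma pow1_apply (x : V) : pow1 K V x = tprod K fun _ : Fin 1 => x := by
  apply (PiTensorProduct.subsingletonEquiv (0 : Fin 1)).injective
  simp [pow1, PiTensorProduct.subsingletonEquiv_apply_tprod]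

lemma pow2_tmul (x y : V) : pow2 K V (x ⊗ₜ[K] y) = tprod K ![x, y] := by
  simp only [pow2, LinearEquiv.trans_apply, TensorProduct.congr_tmul, pow1_apply,
    mulEquiv_tprod, TensorPower.cast_tprod]
  congr 1
  funext k
  fin_cases k <;> rfl

/-- `m ↦ u ⊗ m ⊗ w`. -/
noncomputable def insertPair {a b : ℕ} (u : Fin a → V) (w : Fin b → V) :
    V ⊗[K] V →ₗ[K] ⨂[K]^(a + (2 + b)) V :=
  TensorPower.mulEquiv.toLinearMap ∘ₗ TensorProduct.mk K _ _ (tprod K u) ∘ₗ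
    TensorPower.mulEquiv.toLinearMap ∘ₗ (TensorProduct.mk K _ _).flip (tprod K w) ∘ₗ
      (pow2 K V).toLinearMap

lemma insertPair_tmul {a b : ℕ} (u : Fin a → V) (w : Fin b → V) (x y : V) :
    insertPair u w (x ⊗ₜ[K] y) = tprod K (Fin.append u (Fin.append ![x, y] w)) := by
  simp [insertPair, pow2_tmul, mulEquiv_tprod]

lemma map_insertPair_le {a b : ℕ} (u : Fin a → V) (w : Fin b → V)
    (L : Submodule K (V ⊗[K] V)) : L.map (insertPair u w) ≤ segAux K V a b L := by
  rintro _ ⟨m, hm, rfl⟩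
  exact Submodule.mem_map_of_mem <| tmul_mem_tsub trivial <| Submodule.mem_map_of_mem <|
    tmul_mem_tsub (Submodule.mem_map_of_mem hm) trivial

lemma insertPair_smodEq_idealComp {q : ℕ} (j : Fin (q - 1)) (u : Fin j → V)
    (w : Fin (q - 2 - j) → V) {L : Submodule K (V ⊗[K] V)} {m m' : V ⊗[K] V}
    (h : m ≡ m' [SMOD L]) :
    TensorPower.cast K V (by omega) (insertPair u w m) ≡
      TensorPower.cast K V (by omega) (insertPair u w m') [SMOD idealComp K V q L] := by
  have hq : (j : ℕ) + (2 + (q - 2 - j)) = q := by omega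
  refine (h.map ((TensorPower.cast K V hq).toLinearMap ∘ₗ insertPair u w)).mono ?_
  rw [Submodule.map_comp]
  exact (Submodule.map_mono (map_insertPair_le u w L)).trans (le_iSup (shiftSub K V q L) j)

section DegreeFour

variable {M : Submodule K (V ⊗[K] V)} {x y x' y' : V}

lemma tprod_smodEq_left (h : x ⊗ₜ[K] y ≡ x' ⊗ₜ[K] y' [SMOD M]) (u w : V) :
    tprod K ![x, y, u, w] ≡ tprod K ![x', y', u, w] [SMOD idealComp K V 4 M] := by
  have := insertPair_smodEq_idealComp (q := 4) 0 ![] ![u, w] h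
  simp only [insertPair_tmul, TensorPower.cast_tprod] at this
  convert this using 2 <;> funext k <;> fin_cases k <;> rfl

lemma tprod_smodEq_mid (h : x ⊗ₜ[K] y ≡ x' ⊗ₜ[K] y' [SMOD M]) (u w : V) :
    tprod K ![u, x, y, w] ≡ tprod K ![u, x', y', w] [SMOD idealComp K V 4 M] := by
  have := insertPair_smodEq_idealComp (q := 4) 1 ![u] ![w] h
  simp only [insertPair_tmul, TensorPower.cast_tprod] at this
  convert this using 2 <;> funext k <;> fin_cases k <;> rfl

lemma tprod_smodEq_right (h : x ⊗ₜ[K] y ≡ x' ⊗ₜ[K] y' [SMOD M]) (u w : V) :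
    tprod K ![u, w, x, y] ≡ tprod K ![u, w, x', y'] [SMOD idealComp K V 4 M] := by
  have := insertPair_smodEq_idealComp (q := 4) 2 ![u, w] ![] h
  simp only [insertPair_tmul, TensorPower.cast_tprod] at this
  convert this using 2 <;> funext k <;> fin_cases k <;> rfl

lemma smodEq_tmul_zero (h : x ⊗ₜ[K] y ∈ M) : x ⊗ₜ[K] y ≡ x ⊗ₜ[K] 0 [SMOD M] := by
  rwa [SModEq.sub_mem, tmul_zero, sub_zero]

lemma tprod_smodEq_zero_left (h : x ⊗ₜ[K] y ∈ M) (u w : V) :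
    tprod K ![x, y, u, w] ≡ 0 [SMOD idealComp K V 4 M] :=
  (tprod_smodEq_left (smodEq_tmul_zero h) u w).trans <| by
    rw [MultilinearMap.map_coord_zero _ 1 rfl]

lemma tprod_smodEq_zero_mid (h : x ⊗ₜ[K] y ∈ M) (u w : V) :
    tprod K ![u, x, y, w] ≡ 0 [SMOD idealComp K V 4 M] :=
  (tprod_smodEq_mid (smodEq_tmul_zero h) u w).trans <| by
    rw [MultilinearMap.map_coord_zero _ 2 rfl]

lemma tprod_smodEq_zero_right (h : x ⊗ₜ[K] y ∈ M) (u w : V) :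
    tprod K ![u, w, x, y] ≡ 0 [SMOD idealComp K V 4 M] :=
  (tprod_smodEq_right (smodEq_tmul_zero h) u w).trans <| by
    rw [MultilinearMap.map_coord_zero _ 3 rfl]

end DegreeFour

structure IsXYZPattern (M : Submodule K (V ⊗[K] V)) (X Y Z : Set V) : Prop where
  xx_yy : ∀ x₁ ∈ X, ∀ x₂ ∈ X, ∃ y₁ ∈ Y, ∃ y₂ ∈ Y, x₁ ⊗ₜ[K] x₂ ≡ y₁ ⊗ₜ[K] y₂ [SMOD M]
  yy_xx : ∀ y₁ ∈ Y, ∀ y₂ ∈ Y, ∃ x₁ ∈ X, ∃ x₂ ∈ X, y₁ ⊗ₜ[K] y₂ ≡ x₁ ⊗ₜ[K] x₂ [SMOD M]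
  xy_zz : ∀ x ∈ X, ∀ y ∈ Y, ∃ z₁ ∈ Z, ∃ z₂ ∈ Z, x ⊗ₜ[K] y ≡ z₁ ⊗ₜ[K] z₂ [SMOD M]
  zz_xy : ∀ z₁ ∈ Z, ∀ z₂ ∈ Z, ∃ x ∈ X, ∃ y ∈ Y, z₁ ⊗ₜ[K] z₂ ≡ x ⊗ₜ[K] y [SMOD M]
  xz_mem : ∀ x ∈ X, ∀ z ∈ Z, x ⊗ₜ[K] z ∈ M
  yz_mem : ∀ y ∈ Y, ∀ z ∈ Z, y ⊗ₜ[K] z ∈ M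

namespace IsXYZPattern

variable {M : Submodule K (V ⊗[K] V)} {X Y Z : Set V} {u v w t x x₁ x₂ y z : V}

lemma union_z_mem (P : IsXYZPattern M X Y Z) (hu : u ∈ X ∪ Y) (hz : z ∈ Z) :
    u ⊗ₜ[K] z ∈ M := by
  rcases hu with hu | hu
  exacts [P.xz_mem u hu z hz, P.yz_mem u hu z hz]

lemma tprod_smodEq_zero_of_mid_xy (P : IsXYZPattern M X Y Z) (hu : u ∈ X ∪ Y ∪ Z)
    (hx : x ∈ X) (hy : y ∈ Y) (w : V) :
    tprod K ![u, x, y, w] ≡ 0 [SMOD idealComp K V 4 M] := by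
  obtain ⟨z₁, hz₁, z₂, hz₂, h⟩ := P.xy_zz x hx y hy
  refine (tprod_smodEq_mid h u w).trans ?_
  rcases hu with hu | hu
  · exact tprod_smodEq_zero_left (P.union_z_mem hu hz₁) _ _
  · obtain ⟨x', -, y', hy', h'⟩ := P.zz_xy u hu z₁ hz₁
    exact (tprod_smodEq_left h' _ _).trans (tprod_smodEq_zero_mid (P.yz_mem y' hy' z₂ hz₂) _ _)

lemma tprod_smodEq_zero_of_right_xy (P : IsXYZPattern M X Y Z) (hv : v ∈ X ∪ Y ∪ Z)
    (hx : x ∈ X) (hy : y ∈ Y) (u : V) :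
    tprod K ![u, v, x, y] ≡ 0 [SMOD idealComp K V 4 M] := by
  obtain ⟨z₁, hz₁, z₂, hz₂, h⟩ := P.xy_zz x hx y hy
  refine (tprod_smodEq_right h u v).trans ?_
  rcases hv with hv | hv
  · exact tprod_smodEq_zero_mid (P.union_z_mem hv hz₁) _ _
  · obtain ⟨x', -, y', hy', h'⟩ := P.zz_xy v hv z₁ hz₁
    exact (tprod_smodEq_mid h' _ _).trans (tprod_smodEq_zero_right (P.yz_mem y' hy' z₂ hz₂) _ _)

lemma tprod_smodEq_zero_of_right_xx (P : IsXYZPattern M X Y Z) (hu : u ∈ X ∪ Y ∪ Z)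
    (hv : v ∈ X ∪ Y) (hx₁ : x₁ ∈ X) (hx₂ : x₂ ∈ X) :
    tprod K ![u, v, x₁, x₂] ≡ 0 [SMOD idealComp K V 4 M] := by
  obtain ⟨y₁, hy₁, y₂, hy₂, h⟩ := P.xx_yy x₁ hx₁ x₂ hx₂
  refine (tprod_smodEq_right h u v).trans ?_
  rcases hv with hv | hv
  · exact P.tprod_smodEq_zero_of_mid_xy hu hv hy₁ y₂
  · obtain ⟨x, hx, x', hx', h'⟩ := P.yy_xx v hv y₁ hy₁
    exact (tprod_smodEq_mid h' u y₂).trans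
      (P.tprod_smodEq_zero_of_right_xy (Or.inl (Or.inl hx)) hx' hy₂ u)

lemma tprod_smodEq_zero_of_second_mem_xy (P : IsXYZPattern M X Y Z) (hu : u ∈ X ∪ Y ∪ Z)
    (hv : v ∈ X ∪ Y) (hw : w ∈ X ∪ Y ∪ Z) (ht : t ∈ X ∪ Y ∪ Z) :
    tprod K ![u, v, w, t] ≡ 0 [SMOD idealComp K V 4 M] := by
  rcases hw with (hw | hw) | hw
  · rcases ht with (ht | ht) | ht
    · exact P.tprod_smodEq_zero_of_right_xx hu hv hw ht
    · exact P.tprod_smodEq_zero_of_right_xy (Or.inl hv) hw ht u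
    · exact tprod_smodEq_zero_right (P.xz_mem w hw t ht) u v
  · rcases ht with (ht | ht) | ht
    · rcases hv with hv | hv
      · exact P.tprod_smodEq_zero_of_mid_xy hu hv hw t
      · obtain ⟨x, hx, x', hx', h⟩ := P.yy_xx v hv w hw
        exact (tprod_smodEq_mid h u t).trans
          (P.tprod_smodEq_zero_of_right_xx hu (Or.inl hx) hx' ht)
    · obtain ⟨x, hx, x', hx', h⟩ := P.yy_xx w hw t ht
      exact (tprod_smodEq_right h u v).trans (P.tprod_smodEq_zero_of_right_xx hu hv hx hx')
    · exact tprod_smodEq_zero_right (P.yz_mem w hw t ht) u v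
  · exact tprod_smodEq_zero_mid (P.union_z_mem hv hw) u t

lemma tprod_smodEq_zero (P : IsXYZPattern M X Y Z) (hu : u ∈ X ∪ Y ∪ Z) (hv : v ∈ X ∪ Y ∪ Z)
    (hw : w ∈ X ∪ Y ∪ Z) (ht : t ∈ X ∪ Y ∪ Z) :
    tprod K ![u, v, w, t] ≡ 0 [SMOD idealComp K V 4 M] := by
  rcases hv with hv | hv
  · exact P.tprod_smodEq_zero_of_second_mem_xy hu hv hw ht
  rcases hu with hu | hu
  · exact tprod_smodEq_zero_left (P.union_z_mem hu hv) w t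
  · obtain ⟨x, hx, y, hy, h⟩ := P.zz_xy u hu v hv
    exact (tprod_smodEq_left h w t).trans
      (P.tprod_smodEq_zero_of_second_mem_xy (Or.inl (Or.inl hx)) (Or.inr hy) hw ht)

lemma idealComp_four_eq_top (P : IsXYZPattern M X Y Z) {ι : Type*} (B : Module.Basis ι K V)
    (hB : ∀ i, B i ∈ X ∪ Y ∪ Z) : idealComp K V 4 M = ⊤ := by
  rw [eq_top_iff, ← (Basis.piTensorProduct fun _ : Fin 4 => B).span_eq,
    Submodule.span_le]
  rintro _ ⟨p, rfl⟩
  rw [Basis.piTensorProduct_apply, SetLike.mem_coe, ← SModEq.zero]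
  convert P.tprod_smodEq_zero (hB (p 0)) (hB (p 1)) (hB (p 2)) (hB (p 3)) using 2
  funext k
  fin_cases k <;> rfl

end IsXYZPattern

section Construction

open Function Set

variable (K) {α γ : Type*} (x y : α → V) (z : γ → V) (π : α → γ)

noncomputable def relSpace : Submodule K (V ⊗[K] V) :=
  Submodule.span K <| range <|
    Sum.elim (fun p : α × α => x p.1 ⊗ₜ[K] x p.2 - y p.1 ⊗ₜ[K] y p.2) <|
    Sum.elim (fun p : α × α => x p.1 ⊗ₜ[K] y p.2 - z (π p.1) ⊗ₜ[K] z (π p.2)) <|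
    Sum.elim (fun p : α × γ => x p.1 ⊗ₜ[K] z p.2) fun p : α × γ => y p.1 ⊗ₜ[K] z p.2

variable {K}

lemma isXYZPattern_relSpace (hπ : Surjective π) :
    IsXYZPattern (relSpace K x y z π) (range x) (range y) (range z) where
  xx_yy := by
    rintro _ ⟨i, rfl⟩ _ ⟨j, rfl⟩
    exact ⟨_, ⟨i, rfl⟩, _, ⟨j, rfl⟩,
      SModEq.sub_mem.mpr <| Submodule.subset_span ⟨.inl (i, j), rfl⟩⟩
  yy_xx := by
    rintro _ ⟨i, rfl⟩ _ ⟨j, rfl⟩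
    exact ⟨_, ⟨i, rfl⟩, _, ⟨j, rfl⟩,
      SModEq.symm <| SModEq.sub_mem.mpr <| Submodule.subset_span ⟨.inl (i, j), rfl⟩⟩
  xy_zz := by
    rintro _ ⟨i, rfl⟩ _ ⟨j, rfl⟩
    exact ⟨_, ⟨π i, rfl⟩, _, ⟨π j, rfl⟩,
      SModEq.sub_mem.mpr <| Submodule.subset_span ⟨.inr (.inl (i, j)), rfl⟩⟩
  zz_xy := by
    rintro _ ⟨k, rfl⟩ _ ⟨l, rfl⟩
    obtain ⟨i, rfl⟩ := hπ k
    obtain ⟨j, rfl⟩ := hπ l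
    exact ⟨_, ⟨i, rfl⟩, _, ⟨j, rfl⟩,
      SModEq.symm <| SModEq.sub_mem.mpr <| Submodule.subset_span ⟨.inr (.inl (i, j)), rfl⟩⟩
  xz_mem := by
    rintro _ ⟨i, rfl⟩ _ ⟨k, rfl⟩
    exact Submodule.subset_span ⟨.inr (.inr (.inl (i, k))), rfl⟩
  yz_mem := by
    rintro _ ⟨i, rfl⟩ _ ⟨k, rfl⟩
    exact Submodule.subset_span ⟨.inr (.inr (.inr (i, k))), rfl⟩

lemma finrank_relSpace_le [Fintype α] [Fintype γ] :
    Module.finrank K (relSpace K x y z π) ≤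
      2 * (Fintype.card α * Fintype.card α) + 2 * (Fintype.card α * Fintype.card γ) :=
  (finrank_range_le_card _).trans_eq <| by simp only [Fintype.card_sum, Fintype.card_prod]; ring

end Construction

lemma hq_eq_zero_of_idealComp_eq_top {n d q : ℕ}
    {M₀ : Submodule K ((Fin n → K) ⊗[K] (Fin n → K))} (htop : idealComp K _ q M₀ = ⊤)
    (hM₀ : Module.finrank K M₀ ≤ d) (hd : d ≤ n * n) : hq K n d q = 0 := by
  obtain ⟨M, hle, hM⟩ := Submodule.exists_le_finrank_eq hM₀ (by simpa using hd)
  refine Nat.sInf_eq_zero.mpr (Or.inl ⟨M, hM, ?_⟩)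
  have hMtop : idealComp K _ q M = ⊤ := top_unique (htop ▸ idealComp_mono q hle)
  rw [quadDim, hMtop]
  exact Module.finrank_zero_of_subsingleton

/-- The blocks are `(m, m, m)`, `(m + 1, m + 1, m - 1)`, `(m + 1, m + 1, m)` for
`n = 3m, 3m + 1, 3m + 2`. -/
lemma exists_block_sizes {n : ℕ} (hn : 17 ≤ n ∨ n ∈ ({9, 12, 14, 15} : Set ℕ)) :
    ∃ a c : ℕ, 0 < c ∧ c ≤ a ∧ a + (a + c) = n ∧
      2 * (a * a) + 2 * (a * c) ≤ n * (n - 1) / 2 := by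
  have hcases : (n % 3 = 0 ∧ 9 ≤ n) ∨ (n % 3 = 1 ∧ 16 ≤ n) ∨ (n % 3 = 2 ∧ 14 ≤ n) := by
    simp only [Set.mem_insert_iff, Set.mem_singleton_iff] at hn
    omega
  rcases hcases with ⟨h3, hn⟩ | ⟨h3, hn⟩ | ⟨h3, hn⟩
  · refine ⟨n / 3, n / 3, by omega, le_rfl, by omega, ?_⟩
    obtain ⟨m, rfl⟩ : ∃ m, n = 3 * m := ⟨n / 3, by omega⟩
    rw [Nat.mul_div_cancel_left _ three_pos, Nat.le_div_iff_mul_le two_pos]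
    zify [show 1 ≤ 3 * m by omega]
    nlinarith
  · refine ⟨n / 3 + 1, n / 3 - 1, by omega, by omega, by omega, ?_⟩
    obtain ⟨m, rfl⟩ : ∃ m, n = 3 * m + 1 := ⟨n / 3, by omega⟩
    rw [show (3 * m + 1) / 3 = m by omega, Nat.le_div_iff_mul_le two_pos, Nat.add_sub_cancel]
    zify [show 1 ≤ m by omega]
    nlinarith
  · refine ⟨n / 3 + 1, n / 3, by omega, by omega, by omega, ?_⟩
    obtain ⟨m, rfl⟩ : ∃ m, n = 3 * m + 2 := ⟨n / 3, by omega⟩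
    rw [show (3 * m + 2) / 3 = m by omega, Nat.le_div_iff_mul_le two_pos,
      show 3 * m + 2 - 1 = 3 * m + 1 by omega]
    zify
    nlinarith

end GS

/-- For any field `K` and any `n` with `n ≥ 17` or
`n ∈ {9, 12, 14, 15}`, there is a quadratic `K`-algebra with `n` generators and
`n(n−1)/2` quadratic relations whose fourth graded component vanishes:
`h₄(K, n, n(n−1)/2) = 0`. -/
theorem h_four_half_eq_zero (K : Type*) [Field K] (n : ℕ)
    (hn : 17 ≤ n ∨ n ∈ ({9, 12, 14, 15} : Set ℕ)) :
    GS.hq K n (n * (n - 1) / 2) 4 = 0 := by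
  obtain ⟨a, c, hc, hca, rfl, hdim⟩ := GS.exists_block_sizes hn
  obtain ⟨π, hπ⟩ : ∃ π : Fin a → Fin c, Function.Surjective π :=
    ⟨fun i => ⟨i % c, Nat.mod_lt _ hc⟩,
      fun k => ⟨Fin.castLE hca k, Fin.ext (Nat.mod_eq_of_lt k.2)⟩⟩
  let B := (Pi.basisFun K (Fin (a + (a + c)))).reindex
    ((Equiv.sumCongr (Equiv.refl _) finSumFinEquiv).trans finSumFinEquiv).symm
  refine GS.hq_eq_zero_of_idealComp_eq_top
    (M₀ := GS.relSpace K (B ∘ .inl) (B ∘ .inr ∘ .inl) (B ∘ .inr ∘ .inr) π) ?_ ?_ ?_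
  · exact (GS.isXYZPattern_relSpace _ _ _ _ hπ).idealComp_four_eq_top B
      (by rintro (i | i | i) <;> simp)
  · exact (GS.finrank_relSpace_le _ _ _ _).trans (by simpa using hdim)
  · exact (Nat.div_le_self _ _).trans (Nat.mul_le_mul_left _ (Nat.sub_le _ _))
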